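/- For all n ∈ ℤ and all complex α, ε₁, ε₂, the triangle product function satisfies t_n^{ε₁,ε₂}(α) = (−1)^{n(n+1)/2} · t_{−n−1}^{ε₁,ε₂}(−α − ε₁ − ε₂). -/

import Mathlib

/-!
Both `t_m` and `t_{-m-1}` (for `m ≥ 0`) are products over the triangle `{(i, j) : i + j < m}`:
the factor `α' + (i + 1) ε₁ + (j + 1) ε₂` of `t_{-m-1}(α')` at `α' = -α - ε₁ - ε₂` is
`-(α - i ε₁ - j ε₂)`. So the two sides differ by the sign `(-1)^{m(m+1)/2}`, the size of the
triangle; the case `n < 0` follows by applying the case `n ≥ 0` to `-n - 1` and `-α - ε₁ - ε₂`.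
-/

/-- The triangle product `t_n^{ε₁,ε₂}(α)`: for `n > 0` the product of `α - i ε₁ - j ε₂`
over `i, j ≥ 0` with `i + j < n`; for `n < 0` the product of `α + i ε₁ + j ε₂` over
`i, j > 0` with `i + j ≤ -n`; and `t_0 = 1`. -/
noncomputable def tFun (ε₁ ε₂ α : ℂ) (n : ℤ) : ℂ :=
  if 0 < n then
    ∏ i ∈ Finset.range n.toNat, ∏ j ∈ Finset.range (n.toNat - i),
      (α - (i : ℂ) * ε₁ - (j : ℂ) * ε₂)
  else
    ∏ i ∈ Finset.range (-n).toNat, ∏ j ∈ Finset.range ((-n).toNat - 1 - i),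
      (α + ((i : ℂ) + 1) * ε₁ + ((j : ℂ) + 1) * ε₂)

open Finset

theorem Finset.sum_range_tsub_self (n : ℕ) : ∑ i ∈ range n, (n - i) = n * (n + 1) / 2 := by
  calc ∑ i ∈ range n, (n - i)
      = ∑ i ∈ range (n + 1), (n + 1 - 1 - i) := by simp [sum_range_succ]
    _ = ∑ i ∈ range (n + 1), i := sum_range_reflect id (n + 1)
    _ = n * (n + 1) / 2 := by rw [sum_range_id, Nat.add_sub_cancel, Nat.mul_comm]

section tFun

variable (ε₁ ε₂ α : ℂ)

theorem tFun_natCast (m : ℕ) :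
    tFun ε₁ ε₂ α m = ∏ i ∈ range m, ∏ j ∈ range (m - i), (α - i * ε₁ - j * ε₂) := by
  rcases Nat.eq_zero_or_pos m with rfl | hm
  · simp [tFun]
  · rw [tFun, if_pos (by exact_mod_cast hm), Int.toNat_natCast]

theorem tFun_neg_natCast_sub_one (m : ℕ) :
    tFun ε₁ ε₂ α (-m - 1) =
      ∏ i ∈ range m, ∏ j ∈ range (m - i), (α + (i + 1) * ε₁ + (j + 1) * ε₂) := by
  have hsize : (-(-(m : ℤ) - 1)).toNat = m + 1 := by omega
  rw [tFun, if_neg (by omega), hsize, prod_range_succ]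
  simp

theorem tFun_neg_natCast_sub_one_reflect (m : ℕ) :
    tFun ε₁ ε₂ (-α - ε₁ - ε₂) (-m - 1) = (-1 : ℂ) ^ ((m : ℤ) * (m + 1) / 2) * tFun ε₁ ε₂ α m := by
  have hsign : ((m : ℤ) * (m + 1) / 2) = ((m * (m + 1) / 2 : ℕ) : ℤ) := by push_cast; rfl
  have hfactor : ∀ i j : ℕ, -α - ε₁ - ε₂ + (i + 1) * ε₁ + (j + 1) * ε₂ = -(α - i * ε₁ - j * ε₂) :=
    fun i j ↦ by ring
  simp only [tFun_neg_natCast_sub_one, tFun_natCast, hfactor, prod_neg, card_range,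
    prod_mul_distrib, prod_pow_eq_pow_sum, sum_range_tsub_self, hsign, zpow_natCast]

end tFun

theorem neg_one_zpow_mul_self (e : ℤ) : (-1 : ℂ) ^ e * (-1) ^ e = 1 := by
  rw [← mul_zpow, neg_one_mul, neg_neg, one_zpow]

/-- Reflection symmetry of the triangle product:
`t_n^{ε₁,ε₂}(α) = (-1)^{n(n+1)/2} · t_{-n-1}^{ε₁,ε₂}(-α - ε₁ - ε₂)`. -/
theorem triangle_reflection (n : ℤ) (α ε₁ ε₂ : ℂ) :
    tFun ε₁ ε₂ α n = (-1 : ℂ) ^ (n * (n + 1) / 2) * tFun ε₁ ε₂ (-α - ε₁ - ε₂) (-n - 1) := by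
  rcases le_or_gt 0 n with hn | hn
  · lift n to ℕ using hn
    rw [tFun_neg_natCast_sub_one_reflect, ← mul_assoc, neg_one_zpow_mul_self, one_mul]
  · obtain ⟨m, rfl⟩ : ∃ m : ℕ, n = -m - 1 := ⟨(-n - 1).toNat, by omega⟩
    have hα : α = -(-α - ε₁ - ε₂) - ε₁ - ε₂ := by ring
    have hsign : (-(m : ℤ) - 1) * (-m - 1 + 1) = m * (m + 1) := by ring
    rw [hsign, show -(-(m : ℤ) - 1) - 1 = m by ring]
    conv_lhs => rw [hα]
    exact tFun_neg_natCast_sub_one_reflect ε₁ ε₂ _ m
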